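/- arXiv:2012.12735 — 2 statements merged into one kernel-verified Lean document; each statement's English description precedes it below -/
import Mathlib

section
/- Let ψ be a Gaussian coherent state ψ(x) = (2πħ)^(−1/4) σ^(−1/2) exp(−(σ̆/(4ħσ))(x−q)² + i(p/ħ)(x−q)) with Re σ > 0, Re σ̆ > 0, Re(σ̄σ̆) = 1, and q ≠ 0. Then ‖ψ(−sgn(q)|·|)‖_{L²(ℝ)} ≤ e^{−q²/(4ħ|σ|²)}. -/
/-!
Since `Re (σ̆ / σ) = Re (σ̄ σ̆) / |σ|² = 1 / |σ|²`, the modulus of the coherent state is the real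
Gaussian `A e^{-(y - q)² / D}` with `D = 4ħ|σ|²`, whose amplitude `A` makes its L²-norm equal to 1.
At `y = -sgn(q)|x|` the distance to `q` is `|x| + |q|`, so `(y - q)² ≥ x² + q²` and the reflected
state is dominated pointwise by `e^{-q²/D}` times the centred Gaussian `A e^{-x²/D}` of norm 1.
-/

open MeasureTheory

/-- The Gaussian coherent state `ψ^ħ(σ, σ̆, q, p; x)`. -/
noncomputable def cohSt (hbar : ℝ) (s sb : ℂ) (q p : ℝ) (x : ℝ) : ℂ :=
  (((2 * Real.pi * hbar) ^ ((1 : ℝ) / 4) : ℝ) : ℂ)⁻¹ * (s ^ ((1 : ℂ) / 2))⁻¹ *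
    Complex.exp (-(sb / (4 * (hbar : ℂ) * s)) * ((x : ℂ) - (q : ℂ)) ^ 2
      + Complex.I * ((p : ℂ) / (hbar : ℂ)) * ((x : ℂ) - (q : ℂ)))

open Complex ComplexConjugate in
lemma re_div_eq_re_conj_mul_div_normSq (z w : ℂ) : (z / w).re = (conj w * z).re / normSq w := by
  simp only [div_re, mul_re, conj_re, conj_im]; ring

lemma eLpNorm_two_const_mul_exp_neg_sq_div {c D : ℝ} (hc : 0 ≤ c) (hD : 0 < D) :
    eLpNorm (fun x : ℝ => c * Real.exp (-x ^ 2 / D)) 2 volume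
      = ENNReal.ofReal (c * (Real.pi * D / 2) ^ ((1 : ℝ) / 4)) := by
  have hsq : ∀ x : ℝ, (c * Real.exp (-x ^ 2 / D)) ^ 2 = c ^ 2 * Real.exp (-(2 / D) * x ^ 2) := by
    intro x
    rw [mul_pow, ← Real.exp_nat_mul]
    ring_nf
  have hint : Integrable (fun x : ℝ => c ^ 2 * Real.exp (-(2 / D) * x ^ 2)) :=
    (integrable_exp_neg_mul_sq (by positivity)).const_mul _
  have hmem : MemLp (fun x : ℝ => c * Real.exp (-x ^ 2 / D)) 2 volume := by
    refine (memLp_two_iff_integrable_sq ?_).2 ?_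
    · fun_prop
    · simpa only [hsq] using hint
  rw [hmem.eLpNorm_eq_integral_rpow_norm two_ne_zero ENNReal.ofNat_ne_top]
  congr 1
  simp only [Real.norm_eq_abs, ENNReal.toReal_ofNat, Real.rpow_two, sq_abs, hsq,
    integral_const_mul, integral_gaussian]
  rw [Real.mul_rpow (by positivity) (by positivity), Real.sqrt_eq_rpow,
    ← Real.rpow_mul (by positivity), ← Real.rpow_natCast, ← Real.rpow_mul hc]
  norm_num [div_div_eq_mul_div]

lemma norm_cohSt {hbar : ℝ} (hh : 0 < hbar) {s sb : ℂ} (hnorm : ((starRingEnd ℂ) s * sb).re = 1)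
    (q p y : ℝ) :
    ‖cohSt hbar s sb q p y‖ = ((2 * Real.pi * hbar) ^ ((1 : ℝ) / 4))⁻¹ * (‖s‖ ^ ((1 : ℝ) / 2))⁻¹ *
      Real.exp (-(y - q) ^ 2 / (4 * hbar * ‖s‖ ^ 2)) := by
  have hwidth : (sb / (4 * hbar * s)).re = 1 / (4 * hbar * ‖s‖ ^ 2) := by
    rw [show sb / (4 * hbar * s) = sb / s / ((4 * hbar : ℝ) : ℂ) by push_cast; ring,
      Complex.div_ofReal_re, re_div_eq_re_conj_mul_div_normSq, hnorm, Complex.normSq_eq_norm_sq]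
    ring
  have hexponent : (-(sb / (4 * hbar * s)) * ((y : ℂ) - q) ^ 2
      + Complex.I * (p / hbar) * ((y : ℂ) - q)).re = -(y - q) ^ 2 / (4 * hbar * ‖s‖ ^ 2) := by
    rw [show ((y : ℂ) - q) = ((y - q : ℝ) : ℂ) by push_cast; ring,
      show (p : ℂ) / hbar = ((p / hbar : ℝ) : ℂ) by push_cast; ring]
    simp only [Complex.add_re, Complex.mul_re, Complex.neg_re, Complex.neg_im, Complex.I_re,
      Complex.I_im, ← Complex.ofReal_pow, Complex.ofReal_re, Complex.ofReal_im, hwidth]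
    ring
  rw [cohSt, norm_mul, norm_mul, norm_inv, norm_inv, Complex.norm_exp, hexponent, Complex.norm_real,
    Real.norm_of_nonneg (by positivity), show (1 : ℂ) / 2 = ((1 / 2 : ℝ) : ℂ) by push_cast; ring,
    Complex.norm_cpow_real]

lemma eLpNorm_two_coherent_profile {hbar r : ℝ} (hh : 0 < hbar) (hr : 0 < r) :
    eLpNorm (fun x : ℝ => ((2 * Real.pi * hbar) ^ ((1 : ℝ) / 4))⁻¹ * (r ^ ((1 : ℝ) / 2))⁻¹ *
      Real.exp (-x ^ 2 / (4 * hbar * r ^ 2))) 2 volume = 1 := by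
  have hroot : (Real.pi * (4 * hbar * r ^ 2) / 2) ^ ((1 : ℝ) / 4)
      = (2 * Real.pi * hbar) ^ ((1 : ℝ) / 4) * r ^ ((1 : ℝ) / 2) := by
    rw [show Real.pi * (4 * hbar * r ^ 2) / 2 = (2 * Real.pi * hbar) * r ^ 2 by ring,
      Real.mul_rpow (by positivity) (by positivity), ← Real.rpow_natCast, ← Real.rpow_mul hr.le]
    norm_num
  rw [eLpNorm_two_const_mul_exp_neg_sq_div (by positivity) (by positivity), hroot]
  field_simp
  simp

lemma sq_add_sq_le_sq_neg_sign_mul_abs_sub {q : ℝ} (hq : q ≠ 0) (x : ℝ) :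
    x ^ 2 + q ^ 2 ≤ (-Real.sign q * |x| - q) ^ 2 := by
  rcases hq.lt_or_gt with hneg | hpos
  · rw [Real.sign_of_neg hneg]
    nlinarith [abs_nonneg x, sq_abs x]
  · rw [Real.sign_of_pos hpos]
    nlinarith [abs_nonneg x, sq_abs x]

theorem stmt8_general (hbar : ℝ) (hh : 0 < hbar) (s sb : ℂ) (hs : 0 < s.re)
    (hnorm : ((starRingEnd ℂ) s * sb).re = 1) (q p : ℝ) (hq : q ≠ 0) :
    eLpNorm (fun x : ℝ => cohSt hbar s sb q p (-(Real.sign q) * |x|)) 2 volume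
      ≤ ENNReal.ofReal (Real.exp (-(q ^ 2) / (4 * hbar * ‖s‖ ^ 2))) := by
  have hs0 : 0 < ‖s‖ := norm_pos_iff.2 fun h => by simp [h] at hs
  set D := 4 * hbar * ‖s‖ ^ 2
  set A := ((2 * Real.pi * hbar) ^ ((1 : ℝ) / 4))⁻¹ * (‖s‖ ^ ((1 : ℝ) / 2))⁻¹
  have hpointwise : ∀ x : ℝ, ‖cohSt hbar s sb q p (-Real.sign q * |x|)‖
      ≤ Real.exp (-(q ^ 2) / D) • (A * Real.exp (-x ^ 2 / D)) := by
    intro x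
    rw [norm_cohSt hh hnorm, smul_eq_mul, mul_left_comm, ← Real.exp_add]
    gcongr
    rw [← add_div, div_le_div_iff_of_pos_right (by positivity)]
    linarith [sq_add_sq_le_sq_neg_sign_mul_abs_sub hq x]
  calc eLpNorm (fun x : ℝ => cohSt hbar s sb q p (-Real.sign q * |x|)) 2 volume
      ≤ eLpNorm (Real.exp (-(q ^ 2) / D) • fun x : ℝ => A * Real.exp (-x ^ 2 / D)) 2 volume :=
        eLpNorm_mono_real hpointwise
    _ = ENNReal.ofReal (Real.exp (-(q ^ 2) / D)) := by
        rw [eLpNorm_const_smul, eLpNorm_two_coherent_profile hh hs0, mul_one,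
          Real.enorm_of_nonneg (Real.exp_nonneg _)]

theorem stmt8 (hbar : ℝ) (hh : 0 < hbar) (s sb : ℂ) (hs : 0 < s.re) (hsb : 0 < sb.re)
    (hnorm : ((starRingEnd ℂ) s * sb).re = 1) (q p : ℝ) (hq : q ≠ 0) :
    eLpNorm (fun x : ℝ => cohSt hbar s sb q p (-(Real.sign q) * |x|)) 2 volume
      ≤ ENNReal.ofReal (Real.exp (-(q ^ 2) / (4 * hbar * ‖s‖ ^ 2))) :=
  stmt8_general hbar hh s sb hs hnorm q p hq
end

section
/- Let φ_β(x) = (ħ/√(m|β|))·sgn(x)·e^{−(ħ²/(m|β|))|x|} and ψ(x) = (2πħ)^(−1/4)σ^(−1/2)e^{−(σ̆/(4ħσ))(x−q)² + i(p/ħ)(x−q)} with Re σ, Re σ̆ > 0, Re(σ̄σ̆) = 1, q ≠ 0. Then |∫_ℝ φ_β(x)ψ(x)dx| ≤ (8πħ⁵/(m²β²|σ̆|²))^{1/4} exp(−p²/(ħ|σ̆|²) − (ħ²/(m|β|))(|q| + 2sgn(qp)|p|Im(σ̆σ̄)/|σ̆|²) + ħ⁵/(m²β²|σ̆|²)) +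 (128πħ⁵|σ|²/(m²β²))^{1/4} exp(−q²/(4ħ|σ|²) + ħ⁵|σ|²/(m²β²)). -/
open MeasureTheory

/-- The bound-state eigenfunction `φ_β` of the δ'-interaction Hamiltonian (β < 0). -/
noncomputable def phiB (hbar m β : ℝ) (x : ℝ) : ℝ :=
  (hbar / Real.sqrt (m * |β|)) * Real.sign x * Real.exp (-(hbar ^ 2 / (m * |β|)) * |x|)

/-!
Write `c = ħ²/(m|β|)` and `b = σ̆/(4ħσ)`, so that `ψ` is a Gaussian packet centred at `q` with
`Re b = 1/(4ħ|σ|²)` by the normalisation `Re(σ̄σ̆) = 1`. On the half-line containing `q` the kink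
`sgn(x) e^{-c|x|}` agrees with the smooth exponential `sgn(q) e^{-c sgn(q) x}`, whose overlap with
the packet is an explicit complex Gaussian integral; this gives the first term. On the other
half-line (`xq ≤ 0`) the difference of the two is at most `2 e^{-c sgn(q) x}` and the packet is at
most `e^{-Re b q²} e^{-Re b x²}`, a real Gaussian whose integral gives the second term.
-/

open Real

namespace Real

lemma sign_monotone : Monotone Real.sign := by
  intro a b hab
  unfold Real.sign
  split_ifs <;> linarith

lemma measurable_sign : Measurable Real.sign := sign_monotone.measurable

lemma sign_mul_self (r : ℝ) : sign r * r = |r| := by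
  rcases lt_trichotomy r 0 with h | rfl | h
  · simp [sign_of_neg h, abs_of_neg h]
  · simp
  · simp [sign_of_pos h, abs_of_pos h]

lemma abs_sign_le_one (r : ℝ) : |sign r| ≤ 1 := by
  rcases sign_apply_eq r with h | h | h <;> simp [h]

lemma abs_sign_of_ne_zero {r : ℝ} (hr : r ≠ 0) : |sign r| = 1 := by
  rcases sign_apply_eq_of_ne_zero r hr with h | h <;> simp [h]

lemma sign_mul_mul_abs (q p : ℝ) : sign (q * p) * |p| = sign q * p := by
  rcases lt_trichotomy q 0 with hq | rfl | hq <;> rcases lt_trichotomy p 0 with hp | rfl | hp <;>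
    simp [sign_of_neg, sign_of_pos, mul_pos_of_neg_of_neg, mul_neg_of_neg_of_pos,
      mul_neg_of_pos_of_neg, abs_of_neg, abs_of_pos, *]

end Real

lemma eq_rpow_one_div_four {x y : ℝ} (hx : 0 ≤ x) (h : x ^ 4 = y) : x = y ^ (1 / 4 : ℝ) := by
  rw [← h, one_div]
  exact_mod_cast (pow_rpow_inv_natCast hx (show 4 ≠ 0 by norm_num)).symm

lemma sqrt_pow_four {y : ℝ} (hy : 0 ≤ y) : √y ^ 4 = y ^ 2 := by
  rw [show 4 = 2 * 2 by rfl, pow_mul, sq_sqrt hy]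

section GaussianIntegral

lemma exp_neg_mul_sq_add_mul_eq {a : ℝ} (ha : 0 < a) (t x : ℝ) :
    exp (-a * x ^ 2 + t * x) = exp (-a * (x - t / (2 * a)) ^ 2) * exp (t ^ 2 / (4 * a)) := by
  rw [← exp_add]
  congr 1
  field_simp
  ring

lemma integrable_exp_neg_mul_sq_add_mul {a : ℝ} (ha : 0 < a) (t : ℝ) :
    Integrable fun x => exp (-a * x ^ 2 + t * x) := by
  simp_rw [exp_neg_mul_sq_add_mul_eq ha]
  exact ((integrable_exp_neg_mul_sq ha).comp_sub_right _).mul_const _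

lemma integral_exp_neg_mul_sq_add_mul {a : ℝ} (ha : 0 < a) (t : ℝ) :
    ∫ x, exp (-a * x ^ 2 + t * x) = √(π / a) * exp (t ^ 2 / (4 * a)) := by
  simp_rw [exp_neg_mul_sq_add_mul_eq ha, integral_mul_const,
    integral_sub_right_eq_self (fun x => exp (-a * x ^ 2)), integral_gaussian]

variable {b : ℂ} (hb : 0 < b.re) (w : ℂ) (q : ℝ)
include hb

lemma integrable_cexp_neg_mul_sub_sq_add_mul :
    Integrable fun x : ℝ => Complex.exp (-b * (x - q) ^ 2 + w * (x - q)) := by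
  simpa using (integrable_cexp_quadratic hb w 0).comp_sub_right q

lemma integral_cexp_neg_mul_sub_sq_add_mul :
    ∫ x : ℝ, Complex.exp (-b * (x - q) ^ 2 + w * (x - q)) =
      (π / b) ^ (1 / 2 : ℂ) * Complex.exp (w ^ 2 / (4 * b)) := by
  have h := integral_cexp_quadratic (b := -b) (by simpa using hb) w 0
  have h' := integral_sub_right_eq_self (μ := volume)
    (fun x : ℝ => Complex.exp (-b * x ^ 2 + w * x + 0)) q
  simp only [add_zero, Complex.ofReal_sub] at h h'
  rw [h', h]
  congr 2 <;> ring

end GaussianIntegral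

section Kink

variable {c : ℝ}

lemma sign_mul_exp_neg_mul_abs_of_mul_pos {x q : ℝ} (h : 0 < x * q) :
    sign x * exp (-c * |x|) = sign q * exp (-c * sign q * x) := by
  rcases lt_or_gt_of_ne (left_ne_zero_of_mul h.ne') with hx | hx
  · have hq : q < 0 := by nlinarith
    simp [sign_of_neg hx, sign_of_neg hq, abs_of_neg hx]
  · have hq : 0 < q := by nlinarith
    simp [sign_of_pos hx, sign_of_pos hq, abs_of_pos hx]

lemma abs_sign_mul_exp_neg_mul_abs_sub_le (hc : 0 ≤ c) (x q : ℝ) :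
    |sign x * exp (-c * |x|) - sign q * exp (-c * sign q * x)| ≤ 2 * exp (-c * sign q * x) := by
  have hx : exp (-c * |x|) ≤ exp (-c * sign q * x) := by
    have : sign q * x ≤ |x| := calc
      sign q * x ≤ |sign q| * |x| := (le_abs_self _).trans (abs_mul _ _).le
      _ ≤ |x| := mul_le_of_le_one_left (abs_nonneg x) (abs_sign_le_one q)
    rw [exp_le_exp]
    nlinarith
  calc |sign x * exp (-c * |x|) - sign q * exp (-c * sign q * x)|
      ≤ |sign x| * exp (-c * |x|) + |sign q| * exp (-c * sign q * x) := by
        simpa [abs_mul] using abs_sub (sign x * exp (-c * |x|)) (sign q * exp (-c * sign q * x))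
    _ ≤ 1 * exp (-c * sign q * x) + 1 * exp (-c * sign q * x) := by
        gcongr
        · exact abs_sign_le_one x
        · exact abs_sign_le_one q
    _ = 2 * exp (-c * sign q * x) := by ring

lemma exp_neg_mul_sub_sq_le {a x q : ℝ} (ha : 0 ≤ a) (h : x * q ≤ 0) :
    exp (-a * (x - q) ^ 2) ≤ exp (-a * q ^ 2) * exp (-a * x ^ 2) := by
  rw [← exp_add, exp_le_exp]
  nlinarith [mul_nonneg ha (neg_nonneg.mpr h)]

lemma abs_sign_mul_exp_neg_mul_abs_sub_mul_exp_le (hc : 0 ≤ c) {a : ℝ} (ha : 0 ≤ a) (x q : ℝ) :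
    |sign x * exp (-c * |x|) - sign q * exp (-c * sign q * x)| * exp (-a * (x - q) ^ 2) ≤
      2 * exp (-a * q ^ 2) * exp (-a * x ^ 2 + -c * sign q * x) := by
  rcases lt_or_ge 0 (x * q) with h | h
  · rw [sign_mul_exp_neg_mul_abs_of_mul_pos h, sub_self, abs_zero, zero_mul]
    positivity
  · calc _ ≤ 2 * exp (-c * sign q * x) * (exp (-a * q ^ 2) * exp (-a * x ^ 2)) := by
          gcongr
          · exact abs_sign_mul_exp_neg_mul_abs_sub_le hc x q
          · exact exp_neg_mul_sub_sq_le ha h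
      _ = _ := by rw [exp_add]; ring

end Kink

noncomputable def gaussPacket (b : ℂ) (q k x : ℝ) : ℂ :=
  Complex.exp (-b * (x - q) ^ 2 + Complex.I * k * (x - q))

section GaussPacket

variable {b : ℂ} (q k : ℝ)

lemma norm_gaussPacket (x : ℝ) : ‖gaussPacket b q k x‖ = exp (-b.re * (x - q) ^ 2) := by
  rw [gaussPacket, Complex.norm_exp]
  congr 1
  simp [← Complex.ofReal_sub, ← Complex.ofReal_pow]

lemma continuous_gaussPacket : Continuous (gaussPacket b q k) := by
  unfold gaussPacket
  fun_prop

lemma integrable_gaussPacket (hb : 0 < b.re) : Integrable (gaussPacket b q k) :=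
  integrable_cexp_neg_mul_sub_sq_add_mul hb _ q

lemma exp_mul_gaussPacket (c x : ℝ) :
    (exp (-c * x) : ℂ) * gaussPacket b q k x =
      exp (-c * q) * Complex.exp (-b * (x - q) ^ 2 + (Complex.I * k - c) * (x - q)) := by
  rw [gaussPacket, Complex.ofReal_exp, Complex.ofReal_exp, ← Complex.exp_add, ← Complex.exp_add]
  congr 1
  push_cast
  ring

lemma integrable_exp_mul_gaussPacket (hb : 0 < b.re) (c : ℝ) :
    Integrable fun x => (exp (-c * x) : ℂ) * gaussPacket b q k x := by
  simp_rw [exp_mul_gaussPacket]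
  exact (integrable_cexp_neg_mul_sub_sq_add_mul hb _ q).const_mul _

lemma norm_integral_exp_mul_gaussPacket (hb : 0 < b.re) (c : ℝ) :
    ‖∫ x, (exp (-c * x) : ℂ) * gaussPacket b q k x‖ =
      exp (-c * q) * √(π / ‖b‖) * exp ((Complex.I * k - c) ^ 2 / (4 * b)).re := by
  simp_rw [exp_mul_gaussPacket]
  rw [integral_const_mul, integral_cexp_neg_mul_sub_sq_add_mul hb, norm_mul, norm_mul,
    Complex.norm_exp, Complex.norm_real, Real.norm_of_nonneg (exp_pos _).le,
    show (1 / 2 : ℂ) = ((1 / 2 : ℝ) : ℂ) by norm_num, Complex.norm_cpow_real, norm_div,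
    Complex.norm_real, Real.norm_of_nonneg pi_pos.le, sqrt_eq_rpow, mul_assoc]

end GaussPacket

section KinkOverlap

variable {b : ℂ} {c q : ℝ} (k : ℝ)

lemma integrable_sign_mul_exp_mul_gaussPacket (hb : 0 < b.re) (hc : 0 ≤ c) :
    Integrable fun x => ((sign x * exp (-c * |x|) : ℝ) : ℂ) * gaussPacket b q k x := by
  refine (integrable_gaussPacket q k hb).norm.mono' ?_ (Filter.Eventually.of_forall fun x => ?_)
  · exact (Complex.measurable_ofReal.comp (measurable_sign.mul (by fun_prop)))
      |>.aestronglyMeasurable.mul (continuous_gaussPacket q k).aestronglyMeasurable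
  · rw [norm_mul, Complex.norm_real, Real.norm_eq_abs, abs_mul, abs_of_pos (exp_pos _)]
    refine mul_le_of_le_one_left (norm_nonneg _) (mul_le_one₀ (abs_sign_le_one x) (exp_pos _).le ?_)
    exact exp_le_one_iff.mpr (by nlinarith [abs_nonneg x])

lemma integral_norm_sign_mul_exp_sub_mul_gaussPacket_le (hb : 0 < b.re) (hc : 0 ≤ c)
    (hq : q ≠ 0) :
    ∫ x, ‖((sign x * exp (-c * |x|) - sign q * exp (-c * sign q * x) : ℝ) : ℂ) *
        gaussPacket b q k x‖ ≤
      2 * √(π / b.re) * exp (-b.re * q ^ 2 + c ^ 2 / (4 * b.re)) := by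
  have hbound := (integrable_exp_neg_mul_sq_add_mul hb (-c * sign q)).const_mul
    (2 * exp (-b.re * q ^ 2))
  calc _ ≤ ∫ x, 2 * exp (-b.re * q ^ 2) * exp (-b.re * x ^ 2 + -c * sign q * x) := by
        refine integral_mono_of_nonneg (Filter.Eventually.of_forall fun x => norm_nonneg _) hbound
          (Filter.Eventually.of_forall fun x => ?_)
        simp only [norm_mul, Complex.norm_real, Real.norm_eq_abs, norm_gaussPacket]
        exact abs_sign_mul_exp_neg_mul_abs_sub_mul_exp_le hc hb.le x q
    _ = _ := by
        rw [integral_const_mul, integral_exp_neg_mul_sq_add_mul hb, mul_pow, neg_sq,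
          ← sq_abs (sign q), abs_sign_of_ne_zero hq, one_pow, mul_one, exp_add]
        ring

theorem norm_integral_sign_mul_exp_mul_gaussPacket_le (hb : 0 < b.re) (hc : 0 ≤ c) (hq : q ≠ 0) :
    ‖∫ x, ((sign x * exp (-c * |x|) : ℝ) : ℂ) * gaussPacket b q k x‖ ≤
      √(π / ‖b‖) * exp (-c * |q| + ((Complex.I * k - (c * sign q : ℝ)) ^ 2 / (4 * b)).re) +
        2 * √(π / b.re) * exp (-b.re * q ^ 2 + c ^ 2 / (4 * b.re)) := by
  set F := fun x => ((sign x * exp (-c * |x|) : ℝ) : ℂ) * gaussPacket b q k x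
  set G := fun x => (sign q : ℂ) * ((exp (-(c * sign q) * x) : ℂ) * gaussPacket b q k x)
  have hF : Integrable F := integrable_sign_mul_exp_mul_gaussPacket k hb hc
  have hG : Integrable G := (integrable_exp_mul_gaussPacket q k hb _).const_mul _
  have hFG (x : ℝ) : F x - G x =
      ((sign x * exp (-c * |x|) - sign q * exp (-c * sign q * x) : ℝ) : ℂ) *
        gaussPacket b q k x := by
    simp only [F, G, neg_mul]
    push_cast
    ring
  have hG_norm : ‖∫ x, G x‖ =
      √(π / ‖b‖) * exp (-c * |q| + ((Complex.I * k - (c * sign q : ℝ)) ^ 2 / (4 * b)).re) := by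
    rw [integral_const_mul, norm_mul, norm_integral_exp_mul_gaussPacket q k hb, Complex.norm_real,
      Real.norm_eq_abs, abs_sign_of_ne_zero hq, one_mul, neg_mul, mul_assoc c, sign_mul_self,
      ← neg_mul, exp_add]
    ring
  calc ‖∫ x, F x‖ = ‖(∫ x, G x) + ∫ x, (F x - G x)‖ := by
        rw [integral_sub hF hG, add_sub_cancel]
    _ ≤ ‖∫ x, G x‖ + ∫ x, ‖F x - G x‖ :=
        (norm_add_le _ _).trans (by gcongr; exact norm_integral_le_integral_norm _)
    _ ≤ _ := by
        rw [hG_norm]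
        simp_rw [hFG]
        gcongr
        exact integral_norm_sign_mul_exp_sub_mul_gaussPacket_le k hb hc hq

end KinkOverlap

noncomputable def cohWidth (hbar : ℝ) (s sb : ℂ) : ℂ := sb / (4 * hbar * s)

noncomputable def cohNorm (hbar : ℝ) (s : ℂ) : ℂ :=
  (((2 * π * hbar) ^ ((1 : ℝ) / 4) : ℝ) : ℂ)⁻¹ * (s ^ ((1 : ℂ) / 2))⁻¹

lemma ne_zero_of_re_conj_mul_eq_one {z w : ℂ} (h : ((starRingEnd ℂ) z * w).re = 1) :
    z ≠ 0 ∧ w ≠ 0 := by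
  constructor <;> rintro rfl <;> simp at h

lemma cohSt_eq (hbar : ℝ) (s sb : ℂ) (q p x : ℝ) :
    cohSt hbar s sb q p x = cohNorm hbar s * gaussPacket (cohWidth hbar s sb) q (p / hbar) x := by
  simp only [cohSt, cohNorm, gaussPacket, cohWidth, Complex.ofReal_div]

section CoherentState

variable {hbar : ℝ} {s sb : ℂ}

lemma norm_cohNorm_pow_four (hh : 0 ≤ hbar) :
    ‖cohNorm hbar s‖ ^ 4 = 1 / (2 * π * hbar * ‖s‖ ^ 2) := by
  rw [cohNorm, norm_mul, norm_inv, norm_inv, Complex.norm_real, Real.norm_of_nonneg (by positivity),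
    show (1 / 2 : ℂ) = ((1 / 2 : ℝ) : ℂ) by norm_num, Complex.norm_cpow_real, mul_pow, inv_pow,
    inv_pow, ← rpow_natCast, ← rpow_natCast, ← rpow_mul (by positivity), ← rpow_mul (norm_nonneg s)]
  norm_num
  ring

lemma norm_cohWidth (hh : 0 ≤ hbar) : ‖cohWidth hbar s sb‖ = ‖sb‖ / (4 * hbar * ‖s‖) := by
  rw [cohWidth, norm_div, norm_mul, norm_mul, Complex.norm_real, Real.norm_of_nonneg hh]
  norm_num

variable (hnorm : ((starRingEnd ℂ) s * sb).re = 1)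
include hnorm

lemma re_cohWidth : (cohWidth hbar s sb).re = 1 / (4 * hbar * ‖s‖ ^ 2) := by
  have hs : (starRingEnd ℂ) s ≠ 0 := by simpa using (ne_zero_of_re_conj_mul_eq_one hnorm).1
  have h : cohWidth hbar s sb = (sb * (starRingEnd ℂ) s) / ((4 * hbar * ‖s‖ ^ 2 : ℝ) : ℂ) := by
    rw [cohWidth, Complex.ofReal_mul, Complex.ofReal_pow, ← Complex.mul_conj']
    field_simp
    push_cast
    ring
  rw [h, Complex.div_ofReal_re, mul_comm, hnorm]

lemma re_sq_div_four_mul_cohWidth (k c : ℝ) :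
    ((Complex.I * k - c) ^ 2 / (4 * cohWidth hbar s sb)).re =
      hbar * (c ^ 2 - k ^ 2 - 2 * c * k * (sb * (starRingEnd ℂ) s).im) / ‖sb‖ ^ 2 := by
  obtain ⟨hs, hsb⟩ := ne_zero_of_re_conj_mul_eq_one hnorm
  have h : (Complex.I * k - c) ^ 2 / (4 * cohWidth hbar s sb) =
      hbar * ((Complex.I * k - c) ^ 2 * (s * (starRingEnd ℂ) sb)) / ((‖sb‖ ^ 2 : ℝ) : ℂ) := by
    have : (starRingEnd ℂ) sb ≠ 0 := by simpa using hsb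
    rw [cohWidth, Complex.ofReal_pow, ← Complex.mul_conj']
    field_simp
  rw [h, Complex.div_ofReal_re, Complex.re_ofReal_mul]
  congr 2
  simp only [Complex.mul_re, Complex.mul_im, Complex.conj_re, Complex.conj_im, sq, Complex.sub_re,
    Complex.sub_im, Complex.I_re, Complex.I_im, Complex.ofReal_re, Complex.ofReal_im] at hnorm ⊢
  linear_combination (c ^ 2 - k ^ 2) * hnorm

end CoherentState

noncomputable def overlapPrefactor (hbar m β : ℝ) (s : ℂ) : ℝ :=
  hbar / √(m * |β|) * ‖cohNorm hbar s‖

section Overlap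

variable {hbar m β : ℝ} {s sb : ℂ}

lemma norm_integral_phiB_mul_cohSt (hh : 0 ≤ hbar) (q p : ℝ) :
    ‖∫ x, (phiB hbar m β x : ℂ) * cohSt hbar s sb q p x‖ =
      overlapPrefactor hbar m β s *
        ‖∫ x, ((sign x * exp (-(hbar ^ 2 / (m * |β|)) * |x|) : ℝ) : ℂ) *
          gaussPacket (cohWidth hbar s sb) q (p / hbar) x‖ := by
  have h (x : ℝ) : (phiB hbar m β x : ℂ) * cohSt hbar s sb q p x =
      ((hbar / √(m * |β|) : ℝ) * cohNorm hbar s) *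
        (((sign x * exp (-(hbar ^ 2 / (m * |β|)) * |x|) : ℝ) : ℂ) *
          gaussPacket (cohWidth hbar s sb) q (p / hbar) x) := by
    rw [phiB, cohSt_eq, Complex.ofReal_mul, Complex.ofReal_mul, Complex.ofReal_mul]
    ring
  simp_rw [h, integral_const_mul, norm_mul, Complex.norm_real,
    Real.norm_of_nonneg (div_nonneg hh (sqrt_nonneg _)), overlapPrefactor]

lemma overlapPrefactor_pow_four (hh : 0 ≤ hbar) (hm : 0 ≤ m) :
    overlapPrefactor hbar m β s ^ 4 = hbar ^ 3 / (2 * π * m ^ 2 * β ^ 2 * ‖s‖ ^ 2) := by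
  rw [overlapPrefactor, mul_pow, div_pow, sqrt_pow_four (by positivity), norm_cohNorm_pow_four hh,
    mul_pow, sq_abs]
  field_simp

variable (hh : 0 < hbar) (hm : 0 < m) (hβ : β ≠ 0) (hnorm : ((starRingEnd ℂ) s * sb).re = 1)
include hh hm hβ hnorm

lemma overlapPrefactor_mul_sqrt_pi_div_norm_cohWidth :
    overlapPrefactor hbar m β s * √(π / ‖cohWidth hbar s sb‖) =
      (8 * π * hbar ^ 5 / (m ^ 2 * β ^ 2 * ‖sb‖ ^ 2)) ^ (1 / 4 : ℝ) := by
  obtain ⟨hs, hsb⟩ := ne_zero_of_re_conj_mul_eq_one hnorm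
  refine eq_rpow_one_div_four (by unfold overlapPrefactor; positivity) ?_
  rw [mul_pow, overlapPrefactor_pow_four hh.le hm.le, sqrt_pow_four (by positivity),
    norm_cohWidth hh.le]
  field_simp
  ring

lemma overlapPrefactor_mul_two_sqrt_pi_div_re_cohWidth :
    overlapPrefactor hbar m β s * (2 * √(π / (cohWidth hbar s sb).re)) =
      (128 * π * hbar ^ 5 * ‖s‖ ^ 2 / (m ^ 2 * β ^ 2)) ^ (1 / 4 : ℝ) := by
  obtain ⟨hs, hsb⟩ := ne_zero_of_re_conj_mul_eq_one hnorm
  refine eq_rpow_one_div_four (by unfold overlapPrefactor; positivity) ?_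
  rw [mul_pow, overlapPrefactor_pow_four hh.le hm.le, mul_pow, re_cohWidth hnorm,
    sqrt_pow_four (by positivity)]
  field_simp
  ring

lemma gaussian_term_exponent_eq {q : ℝ} (hq : q ≠ 0) (p : ℝ) :
    -(hbar ^ 2 / (m * |β|)) * |q| +
        ((Complex.I * (p / hbar : ℝ) - (hbar ^ 2 / (m * |β|) * sign q : ℝ)) ^ 2 /
          (4 * cohWidth hbar s sb)).re =
      -(p ^ 2) / (hbar * ‖sb‖ ^ 2)
        - (hbar ^ 2 / (m * |β|))
          * (|q| + 2 * Real.sign (q * p) * |p| * (sb * (starRingEnd ℂ) s).im / ‖sb‖ ^ 2)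
        + hbar ^ 5 / (m ^ 2 * β ^ 2 * ‖sb‖ ^ 2) := by
  have hsb := (ne_zero_of_re_conj_mul_eq_one hnorm).2
  have hβ' : |β| ≠ 0 := abs_ne_zero.mpr hβ
  have hε : sign q ^ 2 = 1 := by rw [← sq_abs, abs_sign_of_ne_zero hq, one_pow]
  rw [re_sq_div_four_mul_cohWidth hnorm, mul_assoc 2 (sign (q * p)) |p|, sign_mul_mul_abs,
    ← sq_abs β]
  field_simp
  rw [hε]
  ring

lemma correction_term_exponent_eq (q : ℝ) :
    -(cohWidth hbar s sb).re * q ^ 2 + (hbar ^ 2 / (m * |β|)) ^ 2 / (4 * (cohWidth hbar s sb).re) =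
      -(q ^ 2) / (4 * hbar * ‖s‖ ^ 2) + hbar ^ 5 * ‖s‖ ^ 2 / (m ^ 2 * β ^ 2) := by
  have hs := (ne_zero_of_re_conj_mul_eq_one hnorm).1
  have hβ' : |β| ≠ 0 := abs_ne_zero.mpr hβ
  rw [re_cohWidth hnorm, ← sq_abs β]
  field_simp

end Overlap

theorem stmt17_general (hbar m β : ℝ) (hh : 0 < hbar) (hm : 0 < m) (hβ : β < 0)
    (s sb : ℂ)
    (hnorm : ((starRingEnd ℂ) s * sb).re = 1) (q p : ℝ) (hq : q ≠ 0) :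
    ‖(∫ x : ℝ, (phiB hbar m β x : ℂ) * cohSt hbar s sb q p x)‖
      ≤ (8 * Real.pi * hbar ^ 5 / (m ^ 2 * β ^ 2 * ‖sb‖ ^ 2)) ^ ((1 : ℝ) / 4)
          * Real.exp (-(p ^ 2) / (hbar * ‖sb‖ ^ 2)
              - (hbar ^ 2 / (m * |β|))
                * (|q| + 2 * Real.sign (q * p) * |p| * (sb * (starRingEnd ℂ) s).im
                    / ‖sb‖ ^ 2)
              + hbar ^ 5 / (m ^ 2 * β ^ 2 * ‖sb‖ ^ 2))
        + (128 * Real.pi * hbar ^ 5 * ‖s‖ ^ 2 / (m ^ 2 * β ^ 2)) ^ ((1 : ℝ) / 4)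
          * Real.exp (-(q ^ 2) / (4 * hbar * ‖s‖ ^ 2)
              + hbar ^ 5 * ‖s‖ ^ 2 / (m ^ 2 * β ^ 2)) := by
  have hs := (ne_zero_of_re_conj_mul_eq_one hnorm).1
  have hb : 0 < (cohWidth hbar s sb).re := by rw [re_cohWidth hnorm]; positivity
  have hc : 0 ≤ hbar ^ 2 / (m * |β|) := by positivity
  rw [norm_integral_phiB_mul_cohSt hh.le,
    ← overlapPrefactor_mul_sqrt_pi_div_norm_cohWidth hh hm hβ.ne hnorm,
    ← gaussian_term_exponent_eq hh hm hβ.ne hnorm hq,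
    ← overlapPrefactor_mul_two_sqrt_pi_div_re_cohWidth hh hm hβ.ne hnorm,
    ← correction_term_exponent_eq hh hm hβ.ne hnorm]
  exact (mul_le_mul_of_nonneg_left (norm_integral_sign_mul_exp_mul_gaussPacket_le _ hb hc hq)
    (by unfold overlapPrefactor; positivity)).trans_eq (by ring)

theorem stmt17 (hbar m β : ℝ) (hh : 0 < hbar) (hm : 0 < m) (hβ : β < 0)
    (s sb : ℂ) (hs : 0 < s.re) (hsb : 0 < sb.re)
    (hnorm : ((starRingEnd ℂ) s * sb).re = 1) (q p : ℝ) (hq : q ≠ 0) :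
    ‖(∫ x : ℝ, (phiB hbar m β x : ℂ) * cohSt hbar s sb q p x)‖
      ≤ (8 * Real.pi * hbar ^ 5 / (m ^ 2 * β ^ 2 * ‖sb‖ ^ 2)) ^ ((1 : ℝ) / 4)
          * Real.exp (-(p ^ 2) / (hbar * ‖sb‖ ^ 2)
              - (hbar ^ 2 / (m * |β|))
                * (|q| + 2 * Real.sign (q * p) * |p| * (sb * (starRingEnd ℂ) s).im
                    / ‖sb‖ ^ 2)
              + hbar ^ 5 / (m ^ 2 * β ^ 2 * ‖sb‖ ^ 2))
        + (128 * Real.pi * hbar ^ 5 * ‖s‖ ^ 2 / (m ^ 2 * β ^ 2)) ^ ((1 : ℝ) / 4)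
          * Real.exp (-(q ^ 2) / (4 * hbar * ‖s‖ ^ 2)
              + hbar ^ 5 * ‖s‖ ^ 2 / (m ^ 2 * β ^ 2)) :=
  stmt17_general hbar m β hh hm hβ s sb hnorm q p hq
end
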